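/- arXiv:2001.08717 — 3 statements merged into one kernel-verified Lean document; each statement's English description precedes it below -/
import Mathlib

section
/- For q ∈ (0,1] and a similarity matrix Z, the map x ∈ ℝ_+^N ↦ ‖x‖_{Z,q}^q is subadditive: for all x, x' ∈ ℝ_+^N, ‖x + x'‖_{Z,q}^q ≤ ‖x‖_{Z,q}^q + ‖x'‖_{Z,q}^q. -/
/-- `‖x‖_{Z,q}^q`, with the convention that a term is `0` whenever `x j = 0`. -/
noncomputable def divNorm {N : ℕ} (Z : Matrix (Fin N) (Fin N) ℝ) (q : ℝ)
    (x : Fin N → ℝ) : ℝ :=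
  ∑ j, if x j = 0 then 0 else x j / (Z.mulVec x j) ^ (1 - q)

theorem divNorm_subadditive
    (N : ℕ) (q : ℝ) (hq : 0 < q) (hq1 : q ≤ 1)
    (Z : Matrix (Fin N) (Fin N) ℝ)
    (hdiag : ∀ i, Z i i = 1)
    (hZ : ∀ i j, 0 ≤ Z i j ∧ Z i j ≤ 1)
    (x x' : Fin N → ℝ) (hx : ∀ j, 0 ≤ x j) (hx' : ∀ j, 0 ≤ x' j) :
    divNorm Z q (x + x') ≤ divNorm Z q x + divNorm Z q x' := by
  unfold divNorm
  rw [← Finset.sum_add_distrib]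
  apply Finset.sum_le_sum
  intro j _
  have hexp : 0 ≤ 1 - q := by linarith
  have key : ∀ (y : Fin N → ℝ), (∀ k, 0 ≤ y k) → y j ≤ Z.mulVec y j := by
    intro y hy
    have h : Z.mulVec y j = ∑ k, Z j k * y k := rfl
    rw [h]
    calc y j = Z j j * y j := by rw [hdiag]; ring
    _ ≤ ∑ k, Z j k * y k :=
      Finset.single_le_sum (fun k _ => mul_nonneg (hZ j k).1 (hy k)) (Finset.mem_univ j)
  have hA := key x hx
  have hB := key x' hx'
  have hAnn : 0 ≤ Z.mulVec x j := le_trans (hx j) hA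
  have hBnn : 0 ≤ Z.mulVec x' j := le_trans (hx' j) hB
  have hAB : Z.mulVec (x + x') j = Z.mulVec x j + Z.mulVec x' j := by
    rw [Matrix.mulVec_add]; rfl
  have haddj : (x + x') j = x j + x' j := rfl
  -- generic estimate: if 0 ≤ a, 0 < B, B ≤ C then a / C^(1-q) ≤ a / B^(1-q)
  have gen : ∀ a B C : ℝ, 0 ≤ a → 0 < B → B ≤ C →
      a / C ^ (1 - q) ≤ a / B ^ (1 - q) := by
    intro a B C ha hB hBC
    have h1 : (0:ℝ) < B ^ (1 - q) := Real.rpow_pos_of_pos hB _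
    have h2 : B ^ (1 - q) ≤ C ^ (1 - q) := Real.rpow_le_rpow hB.le hBC hexp
    gcongr
  simp only [haddj, hAB]
  by_cases hxj : x j = 0
  · by_cases hx'j : x' j = 0
    · simp [hxj, hx'j]
    · have hb : 0 < x' j := lt_of_le_of_ne (hx' j) (Ne.symm hx'j)
      have hBpos : 0 < Z.mulVec x' j := lt_of_lt_of_le hb hB
      have hne : x j + x' j ≠ 0 := by rw [hxj, zero_add]; exact hx'j
      rw [if_neg hne, if_pos hxj, if_neg hx'j, zero_add, hxj, zero_add]
      exact gen (x' j) _ _ hb.le hBpos (le_add_of_nonneg_left hAnn)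
  · have ha : 0 < x j := lt_of_le_of_ne (hx j) (Ne.symm hxj)
    have hApos : 0 < Z.mulVec x j := lt_of_lt_of_le ha hA
    have hne : x j + x' j ≠ 0 := by
      have := hx' j; intro h; linarith
    rw [if_neg hne, if_neg hxj]
    by_cases hx'j : x' j = 0
    · rw [if_pos hx'j, add_zero, hx'j, add_zero]
      exact gen (x j) _ _ ha.le hApos (le_add_of_nonneg_right hBnn)
    · have hb : 0 < x' j := lt_of_le_of_ne (hx' j) (Ne.symm hx'j)
      have hBpos : 0 < Z.mulVec x' j := lt_of_lt_of_le hb hB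
      rw [if_neg hx'j, add_div]
      exact add_le_add
        (gen (x j) _ _ ha.le hApos (le_add_of_nonneg_right hBnn))
        (gen (x' j) _ _ hb.le hBpos (le_add_of_nonneg_left hAnn))
end

section
/- Let q ∈ (0,1) and let Z be a symmetric similarity matrix with all entries strictly positive. Then for every x in the interior of ℝ_+^N, the Hessian matrix M(x) of -‖·‖_{Z,q}^q at x (given by M(x) = D(x)Z + Z^⊤D(x) − (2−q)Z^⊤D'(x)Z with D(x) = diag[(Zx)_ℓ^{q−2}] and D'(x) = diag[x_ℓ(Zx)_ℓ^{q−3}]) has at least one strictly positive diagonal entry; consequently M(x) is never negative semidefinite, so ‖·‖_{Z,q}^q is never convex on ℝ_+^N when N ≥ 1. -/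
/-!
Let `f = Z x` and pick `i` with `f i` minimal. In the diagonal entry
`M i i = 2 f_i^(q-2) - (2-q) ∑ₖ Z_ki² x_k f_k^(q-3)`, the bounds `Z_ki² ≤ Z_ki` and
`f_k^(q-3) ≤ f_i^(q-3)` together with symmetry `∑ₖ Z_ki x_k = f_i` give
`∑ₖ Z_ki² x_k f_k^(q-3) ≤ f_i^(q-2)`, hence `M i i ≥ q f_i^(q-2) > 0`.
-/

open Matrix

variable {ι : Type*} [Fintype ι]

/-- The matrix `M(x)` of the paper: the Hessian of `‖·‖_{Z,q}^q` at `x` is `-(1 - q) M(x)`. -/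
noncomputable def Matrix.similarityHessian [DecidableEq ι] (Z : Matrix ι ι ℝ) (q : ℝ)
    (x : ι → ℝ) : Matrix ι ι ℝ :=
  diagonal (fun ℓ => (Z *ᵥ x) ℓ ^ (q - 2)) * Z + Zᵀ * diagonal (fun ℓ => (Z *ᵥ x) ℓ ^ (q - 2))
    - (2 - q) • (Zᵀ * diagonal (fun ℓ => x ℓ * (Z *ᵥ x) ℓ ^ (q - 3)) * Z)

lemma Matrix.mulVec_pos_of_pos [Nonempty ι] {Z : Matrix ι ι ℝ} {x : ι → ℝ}
    (hZ : ∀ i j, 0 < Z i j) (hx : ∀ i, 0 < x i) (i : ι) : 0 < (Z *ᵥ x) i :=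
  Finset.sum_pos (fun j _ => mul_pos (hZ i j) (hx j)) Finset.univ_nonempty

omit [Fintype ι] in
lemma Matrix.not_posSemidef_neg_of_diag_pos {M : Matrix ι ι ℝ} {i : ι} (hi : 0 < M i i) :
    ¬ (-M).PosSemidef := fun h => by
  have := h.diag_nonneg (i := i)
  rw [neg_apply] at this
  linarith

lemma Matrix.similarityHessian_apply_self [DecidableEq ι] (Z : Matrix ι ι ℝ) (q : ℝ)
    (x : ι → ℝ) (i : ι) :
    similarityHessian Z q x i i = 2 * (Z *ᵥ x) i ^ (q - 2) * Z i i
      - (2 - q) * ∑ k, Z k i ^ 2 * (x k * (Z *ᵥ x) k ^ (q - 3)) := by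
  rw [similarityHessian, sub_apply, add_apply, smul_apply, diagonal_mul, mul_diagonal, mul_apply,
    smul_eq_mul]
  simp only [mul_diagonal, transpose_apply]
  ring_nf

lemma Matrix.sum_sq_mul_mul_rpow_le_of_isMin {Z : Matrix ι ι ℝ} (hsym : Z.IsSymm)
    (hZ : ∀ i j, 0 ≤ Z i j ∧ Z i j ≤ 1) {x : ι → ℝ} (hx : ∀ i, 0 ≤ x i) {p : ℝ} (hp : p ≤ 0)
    {i : ι} (hpos : 0 < (Z *ᵥ x) i) (hmin : ∀ k, (Z *ᵥ x) i ≤ (Z *ᵥ x) k) :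
    ∑ k, Z k i ^ 2 * (x k * (Z *ᵥ x) k ^ p) ≤ (Z *ᵥ x) i ^ (p + 1) := by
  set f := Z *ᵥ x
  calc ∑ k, Z k i ^ 2 * (x k * f k ^ p)
      ≤ ∑ k, Z i k * x k * f i ^ p := Finset.sum_le_sum fun k _ => by
        have hfk : f k ^ p ≤ f i ^ p := Real.rpow_le_rpow_of_nonpos hpos (hmin k) hp
        have hsq : Z k i ^ 2 ≤ Z k i := by nlinarith [hZ k i]
        rw [← hsym.apply i k, mul_assoc]
        exact mul_le_mul hsq (mul_le_mul_of_nonneg_left hfk (hx k))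
          (mul_nonneg (hx k) (Real.rpow_nonneg (hpos.trans_le (hmin k)).le p)) (hZ k i).1
    _ = f i ^ (p + 1) := by
        rw [← Finset.sum_mul, Real.rpow_add_one hpos.ne', mul_comm]
        rfl

lemma Matrix.similarityHessian_apply_self_pos_of_isMin [DecidableEq ι] {Z : Matrix ι ι ℝ}
    (hsym : Z.IsSymm) (hdiag : ∀ i, Z i i = 1) (hZ : ∀ i j, 0 ≤ Z i j ∧ Z i j ≤ 1)
    {x : ι → ℝ} (hx : ∀ i, 0 ≤ x i) {q : ℝ} (hq : 0 < q) (hq2 : q ≤ 2) {i : ι}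
    (hpos : 0 < (Z *ᵥ x) i) (hmin : ∀ k, (Z *ᵥ x) i ≤ (Z *ᵥ x) k) :
    0 < similarityHessian Z q x i i := by
  have hsum := sum_sq_mul_mul_rpow_le_of_isMin hsym hZ hx (p := q - 3) (by linarith) hpos hmin
  rw [show q - 3 + 1 = q - 2 by ring] at hsum
  have hfi : 0 < (Z *ᵥ x) i ^ (q - 2) := Real.rpow_pos_of_pos hpos _
  rw [similarityHessian_apply_self, hdiag]
  nlinarith [mul_le_mul_of_nonneg_left hsum (sub_nonneg.2 hq2)]

theorem never_convex_symmetric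
    (N : ℕ) (hN : 1 ≤ N) (q : ℝ) (hq : 0 < q) (hq1 : q < 1)
    (Z : Matrix (Fin N) (Fin N) ℝ)
    (hsym : Z.IsSymm)
    (hdiag : ∀ i, Z i i = 1)
    (hZ : ∀ i j, 0 < Z i j ∧ Z i j ≤ 1)
    (x : Fin N → ℝ) (hx : ∀ i, 0 < x i)
    (D D' M : Matrix (Fin N) (Fin N) ℝ)
    (hD : D = Matrix.diagonal fun ℓ => (Z.mulVec x ℓ) ^ (q - 2))
    (hD' : D' = Matrix.diagonal fun ℓ => x ℓ * (Z.mulVec x ℓ) ^ (q - 3))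
    (hM : M = D * Z + Z.transpose * D - (2 - q) • (Z.transpose * D' * Z)) :
    (∃ i, 0 < M i i) ∧ ¬ (-M).PosSemidef := by
  have : Nonempty (Fin N) := ⟨⟨0, hN⟩⟩
  have hM' : M = similarityHessian Z q x := by rw [hM, hD, hD', similarityHessian]
  obtain ⟨i, hmin⟩ := Finite.exists_min (Z *ᵥ x)
  have hpos : 0 < M i i := by
    rw [hM']
    exact similarityHessian_apply_self_pos_of_isMin hsym hdiag
      (fun i j => ⟨(hZ i j).1.le, (hZ i j).2⟩) (fun i => (hx i).le) hq (by linarith)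
      (mulVec_pos_of_pos (fun i j => (hZ i j).1) hx i) hmin
  exact ⟨⟨i, hpos⟩, not_posSemidef_neg_of_diag_pos hpos⟩
end

section
/- Fix q ∈ (0,1), ε > 0, K ∈ ℕ, and vectors u, v ∈ ℝ_+^K. If Σ_{k=1}^K (v_k + ε)/(u_k + ε)^{1-q} ≤ Σ_{k=1}^K (u_k + ε)/(u_k + ε)^{1-q}, then Σ_{k=1}^K (v_k + ε)^q ≤ Σ_{k=1}^K (u_k + ε)^q. (This is the key inequality showing the iteratively reweighted linear programming scheme decreases the objective Σ_k (x̃_k + ε)^q.) -/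
/-!
Instead of Hölder's inequality, use weighted AM–GM, `b ^ q * a ^ (1 - q) ≤ q * b + (1 - q) * a`,
with `a = u k + ε` and `b = v k + ε`. Divided by `a ^ (1 - q)`, it bounds `b ^ q` by the tangent
line of the concave map `t ↦ t ^ q` at `a`, evaluated at `b`. Summing over `k` and inserting the
hypothesis gives `∑ b ^ q ≤ q * ∑ a ^ q + (1 - q) * ∑ a ^ q`.
-/

open Finset

namespace Real

lemma div_rpow_one_sub_self {a : ℝ} (ha : 0 < a) (q : ℝ) : a / a ^ (1 - q) = a ^ q := by
  nth_rw 1 [← rpow_one a]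
  rw [← rpow_sub ha, sub_sub_cancel]

lemma rpow_le_tangent_div {a b q : ℝ} (ha : 0 < a) (hb : 0 ≤ b) (hq : 0 ≤ q) (hq1 : q ≤ 1) :
    b ^ q ≤ q * (b / a ^ (1 - q)) + (1 - q) * (a / a ^ (1 - q)) := by
  have hpow : 0 < a ^ (1 - q) := rpow_pos_of_pos ha _
  have amgm : b ^ q * a ^ (1 - q) ≤ q * b + (1 - q) * a :=
    geom_mean_le_arith_mean2_weighted hq (by linarith) hb ha.le (by ring)
  rw [mul_div_assoc', mul_div_assoc', ← add_div, le_div_iff₀ hpow]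
  exact amgm

theorem sum_rpow_le_of_sum_div_rpow_le {ι : Type*} {s : Finset ι} {a b : ι → ℝ} {q : ℝ}
    (ha : ∀ i ∈ s, 0 < a i) (hb : ∀ i ∈ s, 0 ≤ b i) (hq : 0 ≤ q) (hq1 : q ≤ 1)
    (h : ∑ i ∈ s, b i / a i ^ (1 - q) ≤ ∑ i ∈ s, a i / a i ^ (1 - q)) :
    ∑ i ∈ s, b i ^ q ≤ ∑ i ∈ s, a i ^ q := by
  set A := ∑ i ∈ s, a i / a i ^ (1 - q)
  calc ∑ i ∈ s, b i ^ q
      ≤ ∑ i ∈ s, (q * (b i / a i ^ (1 - q)) + (1 - q) * (a i / a i ^ (1 - q))) :=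
        sum_le_sum fun i hi => rpow_le_tangent_div (ha i hi) (hb i hi) hq hq1
    _ = q * ∑ i ∈ s, b i / a i ^ (1 - q) + (1 - q) * A := by
        rw [sum_add_distrib, mul_sum, mul_sum]
    _ ≤ q * A + (1 - q) * A := by gcongr
    _ = ∑ i ∈ s, a i ^ q := by
        rw [← add_mul, add_sub_cancel, one_mul]
        exact sum_congr rfl fun i hi => div_rpow_one_sub_self (ha i hi) q

end Real

theorem irwlp_decreases_objective
    (K : ℕ) (q : ℝ) (hq : 0 < q) (hq1 : q < 1)
    (ε : ℝ) (hε : 0 < ε)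
    (u v : Fin K → ℝ) (hu : ∀ k, 0 ≤ u k) (hv : ∀ k, 0 ≤ v k)
    (h : ∑ k, (v k + ε) / (u k + ε) ^ (1 - q) ≤
         ∑ k, (u k + ε) / (u k + ε) ^ (1 - q)) :
    ∑ k, (v k + ε) ^ q ≤ ∑ k, (u k + ε) ^ q :=
  Real.sum_rpow_le_of_sum_div_rpow_le (fun k _ => by linarith [hu k])
    (fun k _ => by linarith [hv k]) hq.le hq1.le h
end
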